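/- Let M : [0,∞) → ℝ^{n×n} be C¹ with M(t) symmetric and αI ⪯ M(t) ⪯ βI for all t ≥ 0 and some constants 0 < α ≤ β; let C : [0,∞) → ℝ^{n×n} be continuous and bounded with d/dt M(t) − 2C(t) skew-symmetric for every t; let Y : [0,∞) → ℝ^{n×p} be continuous and bounded; let K ∈ ℝ^{n×n} be symmetric positive definite and Γ ∈ ℝ^{p×p} be diagonal with positive diagonal entries. Suppose s : [0,∞) → ℝ^n and θ̃ : [0,∞) → ℝ^p are C¹ and satisfy M(t)s'(t) = −C(t)s(t) − K s(t) + Y(t)θ̃(t) and θ̃'(t) = −Γ Y(t)^T s(t) for all t ≥ 0. Then s and θ̃ are bounded on [0,∞) and s(t) → 0 as t → ∞. -/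

import Mathlib

open Matrix Filter

/-- Action of a real `k × l` matrix on a Euclidean vector. -/
noncomputable def mApply {k l : ℕ} (A : Matrix (Fin k) (Fin l) ℝ)
    (x : EuclideanSpace ℝ (Fin l)) : EuclideanSpace ℝ (Fin k) :=
  (EuclideanSpace.equiv (Fin k) ℝ).symm (A.mulVec (EuclideanSpace.equiv (Fin l) ℝ x))

/-!
`V = sᵀ M s + θ̃ᵀ Γ⁻¹ θ̃` is a Lyapunov function: differentiating it, the skew-symmetry of
`Ṁ - 2C` removes the `C`-term and the adaptive law cancels the cross term `sᵀ Y θ̃`, so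
`V̇ = -2 sᵀ K s ≤ -2κ ‖s‖²` with `κ > 0` a lower bound of `K`. Hence `V` is nonincreasing, and
`M ⪰ αI`, `Γ⁻¹ ⪰ γI` bound `s` and `θ̃` by `V 0`. The error equation, again with `M ⪰ αI`, then
bounds `ṡ`, so `‖s‖²` is uniformly Lipschitz; since `∫ ‖s‖² ≤ V 0 / (2κ)`, Barbalat's argument
gives `s → 0`.
-/

open Set
open scoped RealInnerProductSpace

lemma EuclideanSpace.norm_le_sum_abs {ι : Type*} [Fintype ι] (y : EuclideanSpace ℝ ι) :
    ‖y‖ ≤ ∑ i, |y i| := by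
  rw [EuclideanSpace.norm_eq]
  refine Real.sqrt_le_iff.2 ⟨by positivity, ?_⟩
  simpa using Finset.sum_sq_le_sq_sum_of_nonneg (s := Finset.univ) (f := fun i => |y i|)
    fun _ _ => abs_nonneg _

open scoped MatrixOrder in
lemma Matrix.PosDef.exists_pos_sub_smul_one_posSemidef {ι : Type*} [Fintype ι] [DecidableEq ι]
    {A : Matrix ι ι ℝ} (hA : A.PosDef) : ∃ r : ℝ, 0 < r ∧ (A - r • 1).PosSemidef := by
  rcases isEmpty_or_nonempty ι with hι | hι
  · exact ⟨1, one_pos, by rw [Subsingleton.elim (A - (1 : ℝ) • 1) 0]; exact PosSemidef.zero⟩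
  -- the spectrum of `A` is a compact set of positive reals
  obtain ⟨r, hr, hrA⟩ := (CFC.exists_pos_algebraMap_le_iff (A := Matrix ι ι ℝ)
    hA.isHermitian.isSelfAdjoint).2 fun x hx => (isStrictlyPositive_iff_posDef.2 hA).spectrum_pos hx
  exact ⟨r, hr, Matrix.le_iff.1 (by simpa [Algebra.algebraMap_eq_smul_one] using hrA)⟩

lemma Matrix.IsDiag.exists_isSymm_mul_eq_one_posDef {p : ℕ} {Γ : Matrix (Fin p) (Fin p) ℝ}
    (hΓ : Γ.IsDiag) (hΓpos : ∀ i, 0 < Γ i i) :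
    ∃ D : Matrix (Fin p) (Fin p) ℝ, D.IsSymm ∧ D * Γ = 1 ∧ D.PosDef := by
  refine ⟨diagonal fun i => (Γ i i)⁻¹, isSymm_diagonal _, ?_,
    posDef_diagonal_iff.2 fun i => inv_pos.2 (hΓpos i)⟩
  rw [← hΓ.diagonal_diag, diagonal_mul_diagonal]
  simp [fun i => inv_mul_cancel₀ (hΓpos i).ne']

section mApply

variable {k l : ℕ}

lemma mApply_eq_toEuclideanLin (A : Matrix (Fin k) (Fin l) ℝ) (x : EuclideanSpace ℝ (Fin l)) :
    mApply A x = toEuclideanLin A x := rfl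

lemma mApply_apply (A : Matrix (Fin k) (Fin l) ℝ) (x : EuclideanSpace ℝ (Fin l)) (i : Fin k) :
    mApply A x i = ∑ j, A i j * x j := rfl

lemma mApply_mul {m : ℕ} (A : Matrix (Fin k) (Fin l) ℝ) (B : Matrix (Fin l) (Fin m) ℝ)
    (x : EuclideanSpace ℝ (Fin m)) : mApply (A * B) x = mApply A (mApply B x) := by
  simp [mApply_eq_toEuclideanLin, toLpLin_mul (q := 2)]

lemma mApply_one (x : EuclideanSpace ℝ (Fin l)) : mApply 1 x = x := by simp [mApply]

lemma inner_mApply_left (A : Matrix (Fin k) (Fin l) ℝ) (x : EuclideanSpace ℝ (Fin l))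
    (y : EuclideanSpace ℝ (Fin k)) : ⟪mApply A x, y⟫ = ⟪x, mApply Aᵀ y⟫ := by
  rw [mApply_eq_toEuclideanLin, mApply_eq_toEuclideanLin, ← conjTranspose_eq_transpose_of_trivial,
    toEuclideanLin_conjTranspose_eq_adjoint, LinearMap.adjoint_inner_right]

lemma inner_mApply_self_eq_zero {A : Matrix (Fin k) (Fin k) ℝ} (hA : Aᵀ = -A)
    (x : EuclideanSpace ℝ (Fin k)) : ⟪x, mApply A x⟫ = 0 := by
  have h := inner_mApply_left A x x
  rw [real_inner_comm, hA] at h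
  simp only [mApply_eq_toEuclideanLin, map_neg, LinearMap.neg_apply, inner_neg_right] at h ⊢
  linarith

lemma mul_norm_sq_le_inner_mApply {A : Matrix (Fin k) (Fin k) ℝ} {a : ℝ}
    (h : (A - a • 1).PosSemidef) (x : EuclideanSpace ℝ (Fin k)) :
    a * ‖x‖ ^ 2 ≤ ⟪x, mApply A x⟫ := by
  have hx : 0 ≤ ⟪x, mApply (A - a • 1) x⟫ := by
    rw [EuclideanSpace.inner_eq_star_dotProduct, dotProduct_comm]
    exact h.dotProduct_mulVec_nonneg _
  rw [← real_inner_self_eq_norm_sq]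
  simp only [mApply_eq_toEuclideanLin, map_sub, map_smul, LinearMap.sub_apply,
    LinearMap.smul_apply, inner_sub_right, inner_smul_right] at hx ⊢
  simpa [sub_nonneg, ← mApply_eq_toEuclideanLin, mApply_one] using hx

lemma mul_norm_le_norm_mApply {A : Matrix (Fin k) (Fin k) ℝ} {a : ℝ}
    (h : (A - a • 1).PosSemidef) (x : EuclideanSpace ℝ (Fin k)) :
    a * ‖x‖ ≤ ‖mApply A x‖ := by
  rcases (norm_nonneg x).eq_or_lt with hx | hx
  · rw [← hx, mul_zero]
    exact norm_nonneg _
  refine le_of_mul_le_mul_right ?_ hx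
  calc a * ‖x‖ * ‖x‖ = a * ‖x‖ ^ 2 := by ring
    _ ≤ ⟪x, mApply A x⟫ := mul_norm_sq_le_inner_mApply h x
    _ ≤ ‖x‖ * ‖mApply A x‖ := real_inner_le_norm _ _
    _ = ‖mApply A x‖ * ‖x‖ := mul_comm _ _

lemma norm_mApply_le_of_abs_le {A : Matrix (Fin k) (Fin l) ℝ} {c : ℝ} (hA : ∀ i j, |A i j| ≤ c)
    (x : EuclideanSpace ℝ (Fin l)) : ‖mApply A x‖ ≤ k * l * c * ‖x‖ := by
  calc ‖mApply A x‖ ≤ ∑ i, |mApply A x i| := EuclideanSpace.norm_le_sum_abs _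
    _ ≤ ∑ i : Fin k, ∑ j : Fin l, c * ‖x‖ := by
      gcongr with i
      rw [mApply_apply]
      refine (Finset.abs_sum_le_sum_abs _ _).trans (Finset.sum_le_sum fun j _ => ?_)
      rw [abs_mul]
      exact mul_le_mul (hA i j) (PiLp.norm_apply_le x j) (abs_nonneg _)
        ((abs_nonneg _).trans (hA i j))
    _ = k * l * c * ‖x‖ := by simp; ring

lemma exists_norm_mApply_le {A : ℝ → Matrix (Fin k) (Fin l) ℝ}
    {x : ℝ → EuclideanSpace ℝ (Fin l)} (hA : ∃ c, ∀ t, 0 ≤ t → ∀ i j, |A t i j| ≤ c)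
    (hx : ∃ c, ∀ t, 0 ≤ t → ‖x t‖ ≤ c) : ∃ c, ∀ t, 0 ≤ t → ‖mApply (A t) (x t)‖ ≤ c := by
  obtain ⟨a, ha⟩ := hA
  obtain ⟨b, hb⟩ := hx
  refine ⟨k * l * |a| * b, fun t ht => ?_⟩
  calc ‖mApply (A t) (x t)‖ ≤ k * l * |a| * ‖x t‖ :=
        norm_mApply_le_of_abs_le (fun i j => (ha t ht i j).trans (le_abs_self a)) _
    _ ≤ k * l * |a| * b := by gcongr; exact hb t ht

lemma hasDerivAt_mApply {A : ℝ → Matrix (Fin k) (Fin l) ℝ} {A' : Matrix (Fin k) (Fin l) ℝ}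
    {x : ℝ → EuclideanSpace ℝ (Fin l)} {x' : EuclideanSpace ℝ (Fin l)} {t : ℝ}
    (hA : ∀ i j, HasDerivAt (fun u => A u i j) (A' i j) t) (hx : HasDerivAt x x' t) :
    HasDerivAt (fun u => mApply (A u) (x u)) (mApply A' (x t) + mApply (A t) x') t := by
  let e := EuclideanSpace.equiv (Fin l) ℝ
  have hex := e.hasFDerivAt.comp_hasDerivAt t hx
  have hAx : HasDerivAt (fun u => A u *ᵥ e (x u)) (A' *ᵥ e (x t) + A t *ᵥ e x') t := by
    refine hasDerivAt_pi.2 fun i => ?_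
    simp only [mulVec, dotProduct, Pi.add_apply, ← Finset.sum_add_distrib]
    exact HasDerivAt.fun_sum fun j _ => (hA i j).mul (hasDerivAt_pi.1 hex j)
  refine ((EuclideanSpace.equiv (Fin k) ℝ).symm.hasFDerivAt.comp_hasDerivAt t hAx).congr_deriv ?_
  simp [mApply, e]

lemma hasDerivAt_inner_mApply_self {A : ℝ → Matrix (Fin k) (Fin k) ℝ}
    {A' : Matrix (Fin k) (Fin k) ℝ} {x : ℝ → EuclideanSpace ℝ (Fin k)}
    {x' : EuclideanSpace ℝ (Fin k)} {t : ℝ} (hA : ∀ i j, HasDerivAt (fun u => A u i j) (A' i j) t)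
    (hsymm : (A t).IsSymm) (hx : HasDerivAt x x' t) :
    HasDerivAt (fun u => ⟪x u, mApply (A u) (x u)⟫)
      (⟪x t, mApply A' (x t)⟫ + 2 * ⟪x t, mApply (A t) x'⟫) t := by
  refine (hx.inner ℝ (hasDerivAt_mApply hA hx)).congr_deriv ?_
  have hx'x : ⟪x', mApply (A t) (x t)⟫ = ⟪x t, mApply (A t) x'⟫ := by
    rw [real_inner_comm, inner_mApply_left, hsymm.eq]
  rw [inner_add_right, hx'x]
  ring

end mApply

lemma sub_le_mul_sub_of_hasDerivAt_le {g g' : ℝ → ℝ} {a b C : ℝ} (hab : a ≤ b)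
    (hg : ∀ u ∈ Icc a b, HasDerivAt g (g' u) u) (hg' : ∀ u ∈ Icc a b, g' u ≤ C) :
    g b - g a ≤ C * (b - a) :=
  (convex_Icc a b).image_sub_le_mul_sub_of_deriv_le
    (fun u hu => (hg u hu).continuousAt.continuousWithinAt)
    (fun u hu => (hg u (interior_subset hu)).differentiableAt.differentiableWithinAt)
    (fun u hu => (hg u (interior_subset hu)).deriv ▸ hg' u (interior_subset hu))
    a (left_mem_Icc.2 hab) b (right_mem_Icc.2 hab) hab

lemma antitoneOn_Ici_of_hasDerivAt_nonpos {V V' : ℝ → ℝ}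
    (hV : ∀ t, 0 ≤ t → HasDerivAt V (V' t) t) (hV' : ∀ t, 0 ≤ t → V' t ≤ 0) :
    AntitoneOn V (Ici 0) :=
  antitoneOn_of_hasDerivWithinAt_nonpos (convex_Ici 0)
    (fun t ht => (hV t ht).continuousAt.continuousWithinAt)
    (fun t ht => (hV t (interior_subset ht)).hasDerivWithinAt)
    (fun t ht => hV' t (interior_subset ht))

lemma AntitoneOn.exists_tendsto_atTop_of_bddBelow {V : ℝ → ℝ} (hV : AntitoneOn V (Ici 0))
    (hbdd : BddBelow (V '' Ici 0)) : ∃ l, Tendsto V atTop (nhds l) := by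
  have hmono : Antitone fun u => V (max u 0) := fun a b hab =>
    hV (le_max_right a 0) (le_max_right b 0) (max_le_max_right 0 hab)
  have hbdd' : BddBelow (range fun u => V (max u 0)) :=
    hbdd.mono (range_subset_iff.2 fun u => mem_image_of_mem V (le_max_right u 0))
  refine ⟨_, (tendsto_atTop_ciInf hmono hbdd').congr' ?_⟩
  filter_upwards [eventually_ge_atTop 0] with u hu
  rw [max_eq_left hu]

lemma exists_norm_le_of_mul_sq_le {E : Type*} [SeminormedAddCommGroup E] {x : ℝ → E}
    {V : ℝ → ℝ} {a : ℝ} (ha : 0 < a) (hV : AntitoneOn V (Ici 0))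
    (hxV : ∀ t, 0 ≤ t → a * ‖x t‖ ^ 2 ≤ V t) : ∃ c, ∀ t, 0 ≤ t → ‖x t‖ ≤ c := by
  refine ⟨√(V 0 / a), fun t ht => Real.le_sqrt_of_sq_le ?_⟩
  rw [le_div_iff₀ ha, mul_comm]
  exact (hxV t ht).trans (hV (mem_Ici.2 le_rfl) ht ht)

section Barbalat

variable {V V' f f' : ℝ → ℝ} {L : ℝ}

lemma le_div_add_mul_of_hasDerivAt_le_neg (hV : ∀ t, 0 ≤ t → HasDerivAt V (V' t) t)
    (hV' : ∀ t, 0 ≤ t → V' t ≤ -f t) (hf : ∀ t, 0 ≤ t → HasDerivAt f (f' t) t)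
    (hf' : ∀ t, 0 ≤ t → |f' t| ≤ L) {t δ : ℝ} (ht : 0 ≤ t) (hδ : 0 < δ) :
    f t ≤ (V t - V (t + δ)) / δ + L * δ := by
  have hmem : ∀ u ∈ Icc t (t + δ), 0 ≤ u := fun u hu => ht.trans hu.1
  -- on `[t, t + δ]`, `f` stays above `f t - L δ`, so `V` drops by at least `δ (f t - L δ)`
  have hf_near : ∀ u ∈ Icc t (t + δ), f t - L * δ ≤ f u := by
    intro u hu
    have := sub_le_mul_sub_of_hasDerivAt_le hu.1 (g := fun u => -f u)
      (fun v hv => (hf v (hmem v ⟨hv.1, hv.2.trans hu.2⟩)).neg)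
      (fun v hv => (neg_le_abs _).trans (hf' v (hmem v ⟨hv.1, hv.2.trans hu.2⟩)))
    have hL : 0 ≤ L := (abs_nonneg _).trans (hf' t ht)
    nlinarith [hu.2]
  have hdrop := sub_le_mul_sub_of_hasDerivAt_le (le_add_of_nonneg_right hδ.le)
    (fun u hu => hV u (hmem u hu))
    (fun u hu => (hV' u (hmem u hu)).trans (neg_le_neg (hf_near u hu)))
  rw [add_sub_cancel_left] at hdrop
  rw [← sub_le_iff_le_add, le_div_iff₀ hδ]
  linarith

-- Barbalat's lemma, in the form used for Lyapunov functions.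
theorem tendsto_zero_of_hasDerivAt_le_neg (hV : ∀ t, 0 ≤ t → HasDerivAt V (V' t) t)
    (hV' : ∀ t, 0 ≤ t → V' t ≤ -f t) (hVbdd : BddBelow (V '' Ici 0))
    (hf : ∀ t, 0 ≤ t → HasDerivAt f (f' t) t) (hf' : ∀ t, 0 ≤ t → |f' t| ≤ L)
    (hf0 : ∀ t, 0 ≤ t → 0 ≤ f t) : Tendsto f atTop (nhds 0) := by
  obtain ⟨l, hl⟩ := (antitoneOn_Ici_of_hasDerivAt_nonpos hV fun t ht =>
    (hV' t ht).trans (neg_nonpos.2 (hf0 t ht))).exists_tendsto_atTop_of_bddBelow hVbdd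
  refine tendsto_order.2 ⟨fun a ha => ?_, fun a ha => ?_⟩
  · filter_upwards [eventually_ge_atTop 0] with t ht
    exact ha.trans_le (hf0 t ht)
  obtain ⟨δ, hδ, hLδ⟩ := exists_pos_mul_lt ha L
  have hbound : Tendsto (fun t => (V t - V (t + δ)) / δ + L * δ) atTop (nhds (L * δ)) := by
    simpa using ((hl.sub (hl.comp (tendsto_atTop_add_const_right _ δ tendsto_id))).div_const
      δ).add_const (L * δ)
  filter_upwards [eventually_ge_atTop 0, hbound.eventually (gt_mem_nhds hLδ)] with t ht hlt
  exact (le_div_add_mul_of_hasDerivAt_le_neg hV hV' hf hf' ht hδ).trans_lt hlt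

end Barbalat

theorem tendsto_zero_of_hasDerivAt_le_neg_norm_sq {E : Type*} [NormedAddCommGroup E]
    [InnerProductSpace ℝ E] {V V' : ℝ → ℝ} {x x' : ℝ → E} {c : ℝ} (hc : 0 < c)
    (hV : ∀ t, 0 ≤ t → HasDerivAt V (V' t) t) (hV' : ∀ t, 0 ≤ t → V' t ≤ -(c * ‖x t‖ ^ 2))
    (hVbdd : BddBelow (V '' Ici 0)) (hx : ∀ t, 0 ≤ t → HasDerivAt x (x' t) t)
    (hxb : ∃ B, ∀ t, 0 ≤ t → ‖x t‖ ≤ B) (hx'b : ∃ B, ∀ t, 0 ≤ t → ‖x' t‖ ≤ B) :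
    Tendsto x atTop (nhds 0) := by
  obtain ⟨B, hB⟩ := hxb
  obtain ⟨B', hB'⟩ := hx'b
  have hf : Tendsto (fun t => c * ‖x t‖ ^ 2) atTop (nhds 0) := by
    refine tendsto_zero_of_hasDerivAt_le_neg hV hV' hVbdd
      (fun t ht => (hx t ht).norm_sq.const_mul c) (L := c * (2 * (B * B'))) (fun t ht => ?_)
      (fun t _ => by positivity)
    rw [abs_mul, abs_of_pos hc, abs_mul, abs_two]
    gcongr
    exact (abs_real_inner_le_norm _ _).trans
      (mul_le_mul (hB t ht) (hB' t ht) (norm_nonneg _) ((norm_nonneg _).trans (hB t ht)))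
  refine tendsto_zero_iff_norm_tendsto_zero.2 ?_
  simpa [hc.ne', Real.sqrt_sq (norm_nonneg _)] using (hf.div_const c).sqrt

section ClosedLoop

variable {n p : ℕ}

lemma hasDerivAt_closedLoop_lyapunov {M : ℝ → Matrix (Fin n) (Fin n) ℝ}
    {M' C K : Matrix (Fin n) (Fin n) ℝ} {Y : Matrix (Fin n) (Fin p) ℝ}
    {Γ D : Matrix (Fin p) (Fin p) ℝ} {s : ℝ → EuclideanSpace ℝ (Fin n)}
    {θ : ℝ → EuclideanSpace ℝ (Fin p)} {s' : EuclideanSpace ℝ (Fin n)}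
    {θ' : EuclideanSpace ℝ (Fin p)} {t : ℝ}
    (hM : ∀ i j, HasDerivAt (fun u => M u i j) (M' i j) t) (hMsymm : (M t).IsSymm)
    (hskew : (M' - (2 : ℝ) • C)ᵀ = -(M' - (2 : ℝ) • C)) (hDsymm : D.IsSymm) (hDΓ : D * Γ = 1)
    (hs : HasDerivAt s s' t) (hθ : HasDerivAt θ θ' t)
    (heq1 : mApply (M t) s' = -mApply C (s t) - mApply K (s t) + mApply Y (θ t))
    (heq2 : θ' = -mApply Γ (mApply Yᵀ (s t))) :
    HasDerivAt (fun u => ⟪s u, mApply (M u) (s u)⟫ + ⟪θ u, mApply D (θ u)⟫)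
      (-2 * ⟪s t, mApply K (s t)⟫) t := by
  refine ((hasDerivAt_inner_mApply_self hM hMsymm hs).add
    (hasDerivAt_inner_mApply_self (A := fun _ => D) (A' := 0) (fun _ _ => hasDerivAt_const t _)
      hDsymm hθ)).congr_deriv ?_
  have hM'C : ⟪s t, mApply M' (s t)⟫ = 2 * ⟪s t, mApply C (s t)⟫ := by
    have := inner_mApply_self_eq_zero hskew (s t)
    simp only [mApply_eq_toEuclideanLin, map_sub, map_smul, LinearMap.sub_apply,
      LinearMap.smul_apply, inner_sub_right, inner_smul_right] at this ⊢
    linarith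
  have hDθ' : ⟪θ t, mApply D θ'⟫ = -⟪s t, mApply Y (θ t)⟫ := by
    have hDΓY : mApply D (mApply Γ (mApply Yᵀ (s t))) = mApply Yᵀ (s t) := by
      rw [← mApply_mul, hDΓ, mApply_one]
    rw [heq2, mApply_eq_toEuclideanLin D, map_neg, ← mApply_eq_toEuclideanLin, hDΓY,
      inner_neg_right, ← inner_mApply_left, real_inner_comm]
  rw [hM'C, hDθ', heq1]
  simp only [mApply_eq_toEuclideanLin, map_zero, LinearMap.zero_apply, inner_zero_right,
    inner_add_right, inner_sub_right, inner_neg_right]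
  ring

lemma closedLoop_exists_norm_deriv_le {M C : ℝ → Matrix (Fin n) (Fin n) ℝ}
    {K : Matrix (Fin n) (Fin n) ℝ} {Y : ℝ → Matrix (Fin n) (Fin p) ℝ} {α : ℝ}
    {s s' : ℝ → EuclideanSpace ℝ (Fin n)} {θ : ℝ → EuclideanSpace ℝ (Fin p)} (hα : 0 < α)
    (hMl : ∀ t, 0 ≤ t → (M t - α • (1 : Matrix (Fin n) (Fin n) ℝ)).PosSemidef)
    (hCb : ∃ c, ∀ t, 0 ≤ t → ∀ i j, |C t i j| ≤ c)
    (hYb : ∃ c, ∀ t, 0 ≤ t → ∀ i j, |Y t i j| ≤ c)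
    (heq1 : ∀ t, 0 ≤ t →
      mApply (M t) (s' t) = -mApply (C t) (s t) - mApply K (s t) + mApply (Y t) (θ t))
    (hsb : ∃ c, ∀ t, 0 ≤ t → ‖s t‖ ≤ c) (hθb : ∃ c, ∀ t, 0 ≤ t → ‖θ t‖ ≤ c) :
    ∃ c, ∀ t, 0 ≤ t → ‖s' t‖ ≤ c := by
  obtain ⟨cK, hcK⟩ := Finite.exists_le fun ij : Fin n × Fin n => |K ij.1 ij.2|
  obtain ⟨b₁, h₁⟩ := exists_norm_mApply_le hCb hsb
  obtain ⟨b₂, h₂⟩ := exists_norm_mApply_le (A := fun _ => K) ⟨cK, fun _ _ i j => hcK (i, j)⟩ hsb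
  obtain ⟨b₃, h₃⟩ := exists_norm_mApply_le hYb hθb
  refine ⟨(b₁ + b₂ + b₃) / α, fun t ht => (le_div_iff₀ hα).2 ?_⟩
  calc ‖s' t‖ * α = α * ‖s' t‖ := mul_comm _ _
    _ ≤ ‖mApply (M t) (s' t)‖ := mul_norm_le_norm_mApply (hMl t ht) _
    _ ≤ ‖mApply (C t) (s t)‖ + ‖mApply K (s t)‖ + ‖mApply (Y t) (θ t)‖ := by
      rw [heq1 t ht, sub_eq_add_neg, ← norm_neg (mApply (C t) (s t)),
        ← norm_neg (mApply K (s t))]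
      exact norm_add₃_le
    _ ≤ b₁ + b₂ + b₃ := add_le_add (add_le_add (h₁ t ht) (h₂ t ht)) (h₃ t ht)

end ClosedLoop

theorem stmt_11_general (n p : ℕ)
    (M M' : ℝ → Matrix (Fin n) (Fin n) ℝ)
    (hM' : ∀ t, 0 ≤ t → ∀ i j, HasDerivAt (fun u => M u i j) (M' t i j) t)
    (hMsymm : ∀ t, 0 ≤ t → (M t).IsSymm)
    (α : ℝ) (hα : 0 < α)
    (hMl : ∀ t, 0 ≤ t → (M t - α • (1 : Matrix (Fin n) (Fin n) ℝ)).PosSemidef)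
    (C : ℝ → Matrix (Fin n) (Fin n) ℝ)
    (hCb : ∃ c, ∀ t, 0 ≤ t → ∀ i j, |C t i j| ≤ c)
    (hskew : ∀ t, 0 ≤ t →
      (M' t - (2 : ℝ) • C t)ᵀ = -(M' t - (2 : ℝ) • C t))
    (Y : ℝ → Matrix (Fin n) (Fin p) ℝ)
    (hYb : ∃ c, ∀ t, 0 ≤ t → ∀ i j, |Y t i j| ≤ c)
    (K : Matrix (Fin n) (Fin n) ℝ) (hK : K.PosDef)
    (Γ : Matrix (Fin p) (Fin p) ℝ) (hΓd : Γ.IsDiag) (hΓpos : ∀ i, 0 < Γ i i)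
    (s s' : ℝ → EuclideanSpace ℝ (Fin n)) (θ θ' : ℝ → EuclideanSpace ℝ (Fin p))
    (hs : ∀ t, 0 ≤ t → HasDerivAt s (s' t) t)
    (hθ : ∀ t, 0 ≤ t → HasDerivAt θ (θ' t) t)
    (heq1 : ∀ t, 0 ≤ t →
      mApply (M t) (s' t) = -mApply (C t) (s t) - mApply K (s t) + mApply (Y t) (θ t))
    (heq2 : ∀ t, 0 ≤ t → θ' t = -mApply Γ (mApply (Y t)ᵀ (s t))) :
    (∃ c, ∀ t, 0 ≤ t → ‖s t‖ ≤ c) ∧ (∃ c, ∀ t, 0 ≤ t → ‖θ t‖ ≤ c) ∧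
      Tendsto s atTop (nhds 0) := by
  obtain ⟨D, hDsymm, hDΓ, hD⟩ := hΓd.exists_isSymm_mul_eq_one_posDef hΓpos
  obtain ⟨γ, hγ, hDγ⟩ := hD.exists_pos_sub_smul_one_posSemidef
  obtain ⟨κ, hκ, hKκ⟩ := hK.exists_pos_sub_smul_one_posSemidef
  set V := fun u => ⟪s u, mApply (M u) (s u)⟫ + ⟪θ u, mApply D (θ u)⟫
  have hV : ∀ t, 0 ≤ t → HasDerivAt V (-2 * ⟪s t, mApply K (s t)⟫) t := fun t ht =>
    hasDerivAt_closedLoop_lyapunov (hM' t ht) (hMsymm t ht) (hskew t ht) hDsymm hDΓ (hs t ht)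
      (hθ t ht) (heq1 t ht) (heq2 t ht)
  have hV' : ∀ t, 0 ≤ t → -2 * ⟪s t, mApply K (s t)⟫ ≤ -(2 * κ * ‖s t‖ ^ 2) := fun t _ => by
    linarith [mul_norm_sq_le_inner_mApply hKκ (s t)]
  have hVanti := antitoneOn_Ici_of_hasDerivAt_nonpos hV fun t ht =>
    (hV' t ht).trans (neg_nonpos.2 (by positivity))
  have hVlower : ∀ t, 0 ≤ t → α * ‖s t‖ ^ 2 + γ * ‖θ t‖ ^ 2 ≤ V t := fun t ht =>
    add_le_add (mul_norm_sq_le_inner_mApply (hMl t ht) (s t))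
      (mul_norm_sq_le_inner_mApply hDγ (θ t))
  have hsb := exists_norm_le_of_mul_sq_le (x := s) hα hVanti fun t ht =>
    (le_add_of_nonneg_right (by positivity)).trans (hVlower t ht)
  have hθb := exists_norm_le_of_mul_sq_le (x := θ) hγ hVanti fun t ht =>
    (le_add_of_nonneg_left (by positivity)).trans (hVlower t ht)
  have hVbdd : BddBelow (V '' Ici 0) := ⟨0, by
    rintro _ ⟨t, ht, rfl⟩
    exact (add_nonneg (by positivity) (by positivity)).trans (hVlower t ht)⟩
  exact ⟨hsb, hθb, tendsto_zero_of_hasDerivAt_le_neg_norm_sq (by positivity) hV hV' hVbdd hs hsb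
    (closedLoop_exists_norm_deriv_le hα hMl hCb hYb heq1 hsb hθb)⟩

/-- closed-loop adaptive stability for the Euler–Lagrange error dynamics
`M(t)ṡ = −C(t)s − Ks + Y(t)θ̃`, `θ̃̇ = −ΓY(t)ᵀs`, where `M` is `C¹`, symmetric with
`αI ⪯ M(t) ⪯ βI`, `Ṁ − 2C` is skew-symmetric, `C` and `Y` are continuous and bounded,
`K` is symmetric positive definite and `Γ` is diagonal with positive diagonal entries.
Then `s` and `θ̃` are bounded on `[0,∞)` and `s(t) → 0` as `t → ∞`. -/
theorem stmt_11 (n p : ℕ)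
    (M M' : ℝ → Matrix (Fin n) (Fin n) ℝ)
    (hM' : ∀ t, 0 ≤ t → ∀ i j, HasDerivAt (fun u => M u i j) (M' t i j) t)
    (hM'c : ∀ i j, ContinuousOn (fun t => M' t i j) (Set.Ici (0 : ℝ)))
    (hMsymm : ∀ t, 0 ≤ t → (M t).IsSymm)
    (α β : ℝ) (hα : 0 < α) (hαβ : α ≤ β)
    (hMl : ∀ t, 0 ≤ t → (M t - α • (1 : Matrix (Fin n) (Fin n) ℝ)).PosSemidef)
    (hMu : ∀ t, 0 ≤ t → (β • (1 : Matrix (Fin n) (Fin n) ℝ) - M t).PosSemidef)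
    (C : ℝ → Matrix (Fin n) (Fin n) ℝ)
    (hCc : ∀ i j, Continuous fun t => C t i j)
    (hCb : ∃ c, ∀ t, 0 ≤ t → ∀ i j, |C t i j| ≤ c)
    (hskew : ∀ t, 0 ≤ t →
      (M' t - (2 : ℝ) • C t)ᵀ = -(M' t - (2 : ℝ) • C t))
    (Y : ℝ → Matrix (Fin n) (Fin p) ℝ)
    (hYc : ∀ i j, Continuous fun t => Y t i j)
    (hYb : ∃ c, ∀ t, 0 ≤ t → ∀ i j, |Y t i j| ≤ c)
    (K : Matrix (Fin n) (Fin n) ℝ) (hK : K.PosDef)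
    (Γ : Matrix (Fin p) (Fin p) ℝ) (hΓd : Γ.IsDiag) (hΓpos : ∀ i, 0 < Γ i i)
    (s s' : ℝ → EuclideanSpace ℝ (Fin n)) (θ θ' : ℝ → EuclideanSpace ℝ (Fin p))
    (hs : ∀ t, 0 ≤ t → HasDerivAt s (s' t) t)
    (hθ : ∀ t, 0 ≤ t → HasDerivAt θ (θ' t) t)
    (hs'c : ContinuousOn s' (Set.Ici (0 : ℝ)))
    (hθ'c : ContinuousOn θ' (Set.Ici (0 : ℝ)))
    (heq1 : ∀ t, 0 ≤ t →
      mApply (M t) (s' t) = -mApply (C t) (s t) - mApply K (s t) + mApply (Y t) (θ t))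
    (heq2 : ∀ t, 0 ≤ t → θ' t = -mApply Γ (mApply (Y t)ᵀ (s t))) :
    (∃ c, ∀ t, 0 ≤ t → ‖s t‖ ≤ c) ∧ (∃ c, ∀ t, 0 ≤ t → ‖θ t‖ ≤ c) ∧
      Tendsto s atTop (nhds 0) :=
  stmt_11_general n p M M' hM' hMsymm α hα hMl C hCb hskew Y hYb K hK Γ hΓd hΓpos s s' θ θ' hs hθ
    heq1 heq2
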